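/- Let (M',0) be a germ of real analytic hypersurface of ℂ^n, n ≥ 2, encoded in normal coordinates by Θ̄', with conjugate series Θ'(ζ',w',z') = Σ_{β∈ℕ^{n-1}, β≠0} ζ'^β Θ'_β(w',z') and convention Θ'_0(w',z') := z'. Then there exists no nonzero holomorphic vector field L' = Σ_{k=1}^n a'_k(t') ∂/∂t'_k with a'_k ∈ ℂ{t'} tangent to (M',0) (holomorphic nondegeneracy of M' at 0) if and only if there exist multiindices β^1,…,β^{n-1} ∈ ℕ^{n-1}∖{0} such that, with β^n := 0 and t' = (w',z'), det(∂Θ'_{β^i}/∂t'_j(w',z'))_{1≤i,j≤n} ≢ 0 in ℂ{w',z'}. -/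

import Mathlib

open scoped Classical

noncomputable section

/-- Total degree of a multi-exponent. -/
def degf {σ : Type*} (d : σ →₀ ℕ) : ℕ := d.sum fun _ k => k

/-- A formal power series has a positive radius of convergence. -/
def IsConv {σ : Type*} (f : MvPowerSeries σ ℂ) : Prop :=
  ∃ C r : ℝ, 0 < r ∧ ∀ d : σ →₀ ℕ, ‖MvPowerSeries.coeff (R := ℂ) d f‖ * r ^ degf d ≤ C

/-- Formal partial derivative with respect to the variable `i`. -/
def pder {σ : Type*} (i : σ) (f : MvPowerSeries σ ℂ) : MvPowerSeries σ ℂ :=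
  fun d => ((d i + 1 : ℕ) : ℂ) * MvPowerSeries.coeff (R := ℂ) (d + Finsupp.single i 1) f

/-- Substitution (composition) of formal power series: `msubst a f = f ∘ a`.
This formula is the correct composition whenever every `a s` has zero constant term. -/
def msubst {σ τ : Type*} [Fintype σ] [DecidableEq σ] [DecidableEq τ]
    (a : σ → MvPowerSeries τ ℂ) (f : MvPowerSeries σ ℂ) : MvPowerSeries τ ℂ :=
  fun e => ∑ d ∈ Finset.Iic (∑ s : σ, Finsupp.single s (degf e)),
    MvPowerSeries.coeff (R := ℂ) d f * MvPowerSeries.coeff (R := ℂ) e (d.prod fun s k => (a s) ^ k)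

/-- The series with complex-conjugated coefficients. -/
def conjS {σ : Type*} (f : MvPowerSeries σ ℂ) : MvPowerSeries σ ℂ :=
  MvPowerSeries.map (σ := σ) (starRingEnd ℂ) f

/-- Absolute summability of the monomials of `f` at the point `x`. -/
def SummableAt {σ : Type*} (f : MvPowerSeries σ ℂ) (x : σ → ℂ) : Prop :=
  Summable fun d : σ →₀ ℕ => ‖MvPowerSeries.coeff (R := ℂ) d f‖ * d.prod fun i k => ‖x i‖ ^ k

/-- The value at `x` of (the sum of) the series `f`. -/
def evalAt {σ : Type*} (f : MvPowerSeries σ ℂ) (x : σ → ℂ) : ℂ :=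
  ∑' d : σ →₀ ℕ, MvPowerSeries.coeff (R := ℂ) d f * d.prod fun i k => x i ^ k

/- ### CR geometry in normal coordinates.
`m = n - 1 ≥ 1`.  The variables of `Θ̄` are indexed by `Fin m ⊕ (Fin m ⊕ Unit)`:
the first block is the first (vector) argument, the second block the last two arguments. -/

variable (m : ℕ)

/-- `Θ̄(0,ζ,ξ) ≡ 0` and `Θ̄(w,0,ξ) ≡ 0` (normality), coefficientwise. -/
def NormVanish (Θ : MvPowerSeries (Fin m ⊕ (Fin m ⊕ Unit)) ℂ) : Prop :=
  (∀ d : (Fin m ⊕ (Fin m ⊕ Unit)) →₀ ℕ,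
      (∀ j : Fin m, d (Sum.inl j) = 0) → MvPowerSeries.coeff (R := ℂ) d Θ = 0) ∧
  (∀ d : (Fin m ⊕ (Fin m ⊕ Unit)) →₀ ℕ,
      (∀ j : Fin m, d (Sum.inr (Sum.inl j)) = 0) → MvPowerSeries.coeff (R := ℂ) d Θ = 0)

/-- The complexified defining series `r(t,τ) = z - ξ - iΘ̄(w,ζ,ξ)`, in the
variables `(w,z,ζ,ξ)` indexed by `(Fin m ⊕ Unit) ⊕ (Fin m ⊕ Unit)`. -/
def rSeries (Θ : MvPowerSeries (Fin m ⊕ (Fin m ⊕ Unit)) ℂ) :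
    MvPowerSeries ((Fin m ⊕ Unit) ⊕ (Fin m ⊕ Unit)) ℂ :=
  MvPowerSeries.X (Sum.inl (Sum.inr ())) - MvPowerSeries.X (Sum.inr (Sum.inr ())) -
    (MvPowerSeries.C (σ := _) (R := ℂ)) Complex.I *
      msubst (Sum.elim (fun j => MvPowerSeries.X (Sum.inl (Sum.inl j)))
        (Sum.elim (fun j => MvPowerSeries.X (Sum.inr (Sum.inl j)))
          (fun _ => MvPowerSeries.X (Sum.inr (Sum.inr ()))))) Θ

/-- The conjugate complexified defining series `r̄(τ,t) = ξ - z + iΘ(ζ,w,z)`, in the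
variables `(w,z,ζ,ξ)`. -/
def rbarSeries (Θ : MvPowerSeries (Fin m ⊕ (Fin m ⊕ Unit)) ℂ) :
    MvPowerSeries ((Fin m ⊕ Unit) ⊕ (Fin m ⊕ Unit)) ℂ :=
  MvPowerSeries.X (Sum.inr (Sum.inr ())) - MvPowerSeries.X (Sum.inl (Sum.inr ())) +
    (MvPowerSeries.C (σ := _) (R := ℂ)) Complex.I *
      msubst (Sum.elim (fun j => MvPowerSeries.X (Sum.inr (Sum.inl j)))
        (Sum.elim (fun j => MvPowerSeries.X (Sum.inl (Sum.inl j)))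
          (fun _ => MvPowerSeries.X (Sum.inl (Sum.inr ()))))) (conjS Θ)

/-- Reality of the encoded hypersurface:
`ξ - z + iΘ(ζ,w,z) = α(w,z,ζ,ξ) ⬝ (z - ξ - iΘ̄(w,ζ,ξ))` for a unit `α`. -/
def RealityCond (Θ : MvPowerSeries (Fin m ⊕ (Fin m ⊕ Unit)) ℂ) : Prop :=
  ∃ α : MvPowerSeries ((Fin m ⊕ Unit) ⊕ (Fin m ⊕ Unit)) ℂ,
    IsConv α ∧ MvPowerSeries.constantCoeff (σ := _) (R := ℂ) α ≠ 0 ∧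
      rbarSeries m Θ = α * rSeries m Θ

/-- `Θ̄` encodes a germ of real analytic hypersurface in normal coordinates. -/
def NormalEnc (Θ : MvPowerSeries (Fin m ⊕ (Fin m ⊕ Unit)) ℂ) : Prop :=
  IsConv Θ ∧ NormVanish m Θ ∧ RealityCond m Θ

/-- Minimality at `0` : `Θ̄(w,ζ,0) ≢ 0`. -/
def MinimalAt0 (Θ : MvPowerSeries (Fin m ⊕ (Fin m ⊕ Unit)) ℂ) : Prop :=
  ∃ d : (Fin m ⊕ (Fin m ⊕ Unit)) →₀ ℕ,
    d (Sum.inr (Sum.inr ())) = 0 ∧ MvPowerSeries.coeff (R := ℂ) d Θ ≠ 0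

/-- The coefficient series `Θ'_β(w',z')` of `ζ'^β` in `Θ'(ζ',w',z')` (the series with
conjugated coefficients), with the convention `Θ'_0(w',z') := z'`. -/
def thetaCoef (Θ : MvPowerSeries (Fin m ⊕ (Fin m ⊕ Unit)) ℂ) (β : Fin m →₀ ℕ) :
    MvPowerSeries (Fin m ⊕ Unit) ℂ :=
  if β = 0 then MvPowerSeries.X (Sum.inr ())
  else fun d => MvPowerSeries.coeff (R := ℂ) (Finsupp.sumElim β d) (conjS Θ)

/-- The substitution `ξ := z - iΘ(ζ,w,z)`, a series in the variables `(w,z,ζ)`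
indexed by `(Fin m ⊕ Unit) ⊕ Fin m`. -/
def xiSub (Θ : MvPowerSeries (Fin m ⊕ (Fin m ⊕ Unit)) ℂ) :
    MvPowerSeries ((Fin m ⊕ Unit) ⊕ Fin m) ℂ :=
  MvPowerSeries.X (Sum.inl (Sum.inr ())) -
    (MvPowerSeries.C (σ := _) (R := ℂ)) Complex.I *
      msubst (Sum.elim (fun j => MvPowerSeries.X (Sum.inr j))
        (Sum.elim (fun j => MvPowerSeries.X (Sum.inl (Sum.inl j)))
          (fun _ => MvPowerSeries.X (Sum.inl (Sum.inr ()))))) (conjS Θ)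

/-- The assignment sending `(ζ,ξ)` to `(ζ, z - iΘ(ζ,w,z))`, with values in the
variables `(w,z,ζ)`. -/
def tauSub (Θ : MvPowerSeries (Fin m ⊕ (Fin m ⊕ Unit)) ℂ) :
    (Fin m ⊕ Unit) → MvPowerSeries ((Fin m ⊕ Unit) ⊕ Fin m) ℂ :=
  Sum.elim (fun j => MvPowerSeries.X (Sum.inr j)) (fun _ => xiSub m Θ)

/-- `h = (g,f)` is a formal CR map `(M,0) → (M',0)` :  `h(0) = 0` and
`f(w,z) - f̄(ζ,ξ) - iΘ̄'(g(w,z), ḡ(ζ,ξ), f̄(ζ,ξ)) ≡ 0` in `ℂ⟦w,z,ζ⟧` after the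
substitution `ξ := z - iΘ(ζ,w,z)`.  The components of `h` are indexed by
`Fin m ⊕ Unit`: `g = h ∘ Sum.inl` and `f = h (Sum.inr ())`. -/
def IsCRMap (Θ Θ' : MvPowerSeries (Fin m ⊕ (Fin m ⊕ Unit)) ℂ)
    (h : (Fin m ⊕ Unit) → MvPowerSeries (Fin m ⊕ Unit) ℂ) : Prop :=
  (∀ k, MvPowerSeries.constantCoeff (σ := _) (R := ℂ) (h k) = 0) ∧
  msubst (fun k => MvPowerSeries.X (Sum.inl k)) (h (Sum.inr ())) -
      msubst (tauSub m Θ) (conjS (h (Sum.inr ()))) -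
      (MvPowerSeries.C (σ := _) (R := ℂ)) Complex.I *
        msubst (Sum.elim
            (fun j => msubst (fun k => MvPowerSeries.X (Sum.inl k)) (h (Sum.inl j)))
            (Sum.elim (fun j => msubst (tauSub m Θ) (conjS (h (Sum.inl j))))
              (fun _ => msubst (tauSub m Θ) (conjS (h (Sum.inr ())))))) Θ'
    = 0

/-- `h` is invertible : nonzero Jacobian determinant at `0`. -/
def InvertibleMap (h : (Fin m ⊕ Unit) → MvPowerSeries (Fin m ⊕ Unit) ℂ) : Prop :=
  Matrix.det (Matrix.of fun j k : Fin m ⊕ Unit =>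
    MvPowerSeries.coeff (R := ℂ) (Finsupp.single k 1) (h j)) ≠ 0

/-- Holomorphic nondegeneracy at `0` witnessed by the multiindices `B i ≠ 0`
(and `β^n := 0`) : `det(∂Θ'_{β^i}/∂t'_j) ≢ 0`. -/
def HoloNondegWith (Θ' : MvPowerSeries (Fin m ⊕ (Fin m ⊕ Unit)) ℂ)
    (B : Fin m → (Fin m →₀ ℕ)) : Prop :=
  (∀ i, B i ≠ 0) ∧
  Matrix.det (Matrix.of fun i j : Fin m ⊕ Unit =>
    pder j (thetaCoef m Θ' (Sum.elim B (fun _ => (0 : Fin m →₀ ℕ)) i))) ≠ 0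

/-- Holomorphic nondegeneracy at `0`. -/
def HoloNondeg (Θ' : MvPowerSeries (Fin m ⊕ (Fin m ⊕ Unit)) ℂ) : Prop :=
  ∃ B : Fin m → (Fin m →₀ ℕ), HoloNondegWith m Θ' B

/-- The reflection function `ℛ'_h(w,z,λ̄',μ̄') = μ̄' - f(w,z) + i Σ_{β≠0} λ̄'^β Θ'_β(g(w,z),f(w,z))`,
a series in the variables `(w,z)` (first block) and `(λ̄',μ̄')` (second block).
The series `i Σ_{β≠0} λ̄'^β Θ'_β(g(w,z),f(w,z))`, defined coefficientwise. -/
def reflTail (Θ' : MvPowerSeries (Fin m ⊕ (Fin m ⊕ Unit)) ℂ)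
    (h : (Fin m ⊕ Unit) → MvPowerSeries (Fin m ⊕ Unit) ℂ) :
    MvPowerSeries ((Fin m ⊕ Unit) ⊕ (Fin m ⊕ Unit)) ℂ :=
  fun D =>
    let p := Finsupp.sumFinsuppEquivProdFinsupp D
    let q := Finsupp.sumFinsuppEquivProdFinsupp p.2
    if q.2 = 0 ∧ q.1 ≠ 0 then
      Complex.I * MvPowerSeries.coeff (R := ℂ) p.1 (msubst h (thetaCoef m Θ' q.1))
    else 0

def reflFn (Θ' : MvPowerSeries (Fin m ⊕ (Fin m ⊕ Unit)) ℂ)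
    (h : (Fin m ⊕ Unit) → MvPowerSeries (Fin m ⊕ Unit) ℂ) :
    MvPowerSeries ((Fin m ⊕ Unit) ⊕ (Fin m ⊕ Unit)) ℂ :=
  MvPowerSeries.X (Sum.inr (Sum.inr ())) -
    msubst (fun k => MvPowerSeries.X (Sum.inl k)) (h (Sum.inr ())) +
    reflTail m Θ' h


/-- Restriction `ξ := 0` : the series `Θ̄(w,ζ,0)` in the variables `(w,ζ)`
indexed by `Fin m ⊕ Fin m`. -/
def restXi0 (Θ : MvPowerSeries (Fin m ⊕ (Fin m ⊕ Unit)) ℂ) :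
    MvPowerSeries (Fin m ⊕ Fin m) ℂ :=
  msubst (Sum.elim (fun j => MvPowerSeries.X (Sum.inl j))
    (Sum.elim (fun j => MvPowerSeries.X (Sum.inr j)) (fun _ => 0))) Θ

/-- Restriction `z := 0` of a series in the variables `(w,z)`. -/
def restZ0 (f : MvPowerSeries (Fin m ⊕ Unit) ℂ) : MvPowerSeries (Fin m) ℂ :=
  msubst (Sum.elim MvPowerSeries.X (fun _ => 0)) f

/-- `Θ'_β(g(w,z), f(w,z))`, the composition of the coefficient series `Θ'_β`
with the formal map `h = (g,f)`. -/
def thetaComp (Θ' : MvPowerSeries (Fin m ⊕ (Fin m ⊕ Unit)) ℂ)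
    (h : (Fin m ⊕ Unit) → MvPowerSeries (Fin m ⊕ Unit) ℂ) (β : Fin m →₀ ℕ) :
    MvPowerSeries (Fin m ⊕ Unit) ℂ :=
  msubst h (thetaCoef m Θ' β)

/-- The reflection function restricted to the first Segre chain `z = 0`, a series in
the variables `(w, λ̄', μ̄')` indexed by `Fin m ⊕ (Fin m ⊕ Unit)`. -/
def reflAt0 (Θ' : MvPowerSeries (Fin m ⊕ (Fin m ⊕ Unit)) ℂ)
    (h : (Fin m ⊕ Unit) → MvPowerSeries (Fin m ⊕ Unit) ℂ) :
    MvPowerSeries (Fin m ⊕ (Fin m ⊕ Unit)) ℂ :=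
  msubst (Sum.elim (Sum.elim (fun j => MvPowerSeries.X (Sum.inl j)) (fun _ => 0))
    (fun k => MvPowerSeries.X (Sum.inr k))) (reflFn m Θ' h)

/-- Segre nondegeneracy at `0` witnessed by the multiindices `B i ≠ 0` :
`det(∂Θ'_{β^i}/∂w'_j (w',0))_{1≤i,j≤n-1} ≢ 0`. -/
def SegreNondegWith (Θ' : MvPowerSeries (Fin m ⊕ (Fin m ⊕ Unit)) ℂ)
    (B : Fin m → (Fin m →₀ ℕ)) : Prop :=
  (∀ i, B i ≠ 0) ∧
  Matrix.det (Matrix.of fun i j : Fin m =>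
    restZ0 m (pder (Sum.inl j) (thetaCoef m Θ' (B i)))) ≠ 0

/-- The parametrization of the second Segre chain : the assignment
`(w,z) ↦ (w, iΘ̄(w,ζ,0))`, with values in the variables `(w,ζ)`. -/
def segre2 (Θ : MvPowerSeries (Fin m ⊕ (Fin m ⊕ Unit)) ℂ) :
    (Fin m ⊕ Unit) → MvPowerSeries (Fin m ⊕ Fin m) ℂ :=
  Sum.elim (fun j => MvPowerSeries.X (Sum.inl j))
    (fun _ => (MvPowerSeries.C (σ := _) (R := ℂ)) Complex.I * restXi0 m Θ)

/-- A nontrivial holomorphic vector field `L' = Σ a_k ∂/∂t'_k` with convergent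
coefficients which is tangent to the hypersurface encoded by `Θ'`, i.e.
`Σ_k a_k(w',z') ∂_{t'_k}[ξ' - z' + iΘ'(ζ',w',z')]` lies in the ideal generated by
`ξ' - z' + iΘ'(ζ',w',z')` (with a convergent cofactor). -/
def IsTangentField (Θ' : MvPowerSeries (Fin m ⊕ (Fin m ⊕ Unit)) ℂ)
    (a : (Fin m ⊕ Unit) → MvPowerSeries (Fin m ⊕ Unit) ℂ) : Prop :=
  (∀ k, IsConv (a k)) ∧
  ∃ q : MvPowerSeries ((Fin m ⊕ Unit) ⊕ (Fin m ⊕ Unit)) ℂ, IsConv q ∧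
    (∑ k : Fin m ⊕ Unit,
        msubst (fun j => MvPowerSeries.X (Sum.inl j)) (a k) *
          pder (Sum.inl k) (rbarSeries m Θ'))
      = q * rbarSeries m Θ'



/-!
Write `r̄' = ξ' + R(w',z',ζ')` with `R = -z' + iΘ'(ζ',w',z')`. Since the coefficients of `L'`
depend on `t'` only, `L' r̄' = L' R` does not involve `ξ'`, while a multiple `q·(ξ' + R)` with
`R(0) = 0` is free of `ξ'` only if `q = 0`. So `L'` is tangent iff `L' R = 0`, i.e. (expanding in
powers of `ζ'`, and using `Θ'(0,w',z') = 0` for the constant term) iff `L' Θ'_β = 0` for every `β`: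
tangent fields are the convergent kernel vectors of the Jacobian matrix `(∂Θ'_β/∂t'_j)_{β,j}`.
A nonzero `n × n` minor of this matrix rules out nonzero kernel vectors, and since `∇Θ'_0 = e_n`,
Cramer's rule lets the row `β = 0` enter such a minor. If all `n × n` minors vanish, bordering a
maximal nonzero minor and expanding along the new row gives a kernel vector whose entries are
minors, hence convergent.
-/

open MvPowerSeries Finset.HasAntidiagonal
open scoped Matrix

lemma degf_eq_degree {σ : Type*} (d : σ →₀ ℕ) : degf d = d.degree := rfl

lemma degf_add {σ : Type*} (a b : σ →₀ ℕ) : degf (a + b) = degf a + degf b :=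
  map_add Finsupp.degree a b

lemma degf_sumElim {σ τ : Type*} (a : σ →₀ ℕ) (b : τ →₀ ℕ) :
    degf (Finsupp.sumElim a b) = degf a + degf b := by
  rw [degf_eq_degree, Finsupp.sumElim_eq_add, map_add, Finsupp.degree_mapDomain,
    Finsupp.degree_mapDomain]
  rfl

lemma Finsupp.card_antidiagonal_le_two_pow {σ : Type*} [DecidableEq σ] (d : σ →₀ ℕ) :
    (antidiagonal d).card ≤ 2 ^ d.degree := by
  change (Finsupp.antidiagonal' d).support.card ≤ _
  rw [Finsupp.antidiagonal', Multiset.toFinsupp_support]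
  refine (Multiset.toFinset_card_le _).trans ?_
  rw [Multiset.card_map, Multiset.card_antidiagonal, Finsupp.card_toMultiset]
  rfl

instance Filter.TendstoCofinite.inl {σ τ : Type*} :
    Filter.TendstoCofinite (Sum.inl : σ → σ ⊕ τ) :=
  Filter.tendstoCofinite_of_injective Sum.inl_injective

instance Filter.TendstoCofinite.swap {σ τ : Type*} :
    Filter.TendstoCofinite (Sum.swap : σ ⊕ τ → τ ⊕ σ) :=
  Filter.tendstoCofinite_of_injective Sum.swap_leftInverse.injective

namespace Matrix

variable {R ι κ : Type*} [CommRing R] [Fintype κ] [DecidableEq κ]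

lemma det_mem_subring {n : Type*} [Fintype n] [DecidableEq n] (S : Subring R)
    {M : Matrix n n R} (hM : ∀ i j, M i j ∈ S) : M.det ∈ S := by
  rw [det_apply]
  exact S.sum_mem fun σ _ => zsmul_mem (S.prod_mem fun i _ => hM _ _) _

lemma injective_of_det_submatrix_ne_zero {v : Matrix ι κ R} {ρ : κ → ι}
    (h : (v.submatrix ρ id).det ≠ 0) : Function.Injective ρ := by
  intro i j hij
  by_contra hne
  exact h (det_zero_of_row_eq hne (funext fun k => by simp only [submatrix_apply, hij]))

lemma exists_det_submatrix_ne_zero_of_row_eq_single {v : Matrix ι κ R} {i₀ : ι} {k₀ : κ}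
    (hv : v i₀ = Pi.single k₀ 1) {ρ : κ → ι} (hρ : (v.submatrix ρ id).det ≠ 0) :
    ∃ ρ' : κ → ι, ρ' k₀ = i₀ ∧ (v.submatrix ρ' id).det ≠ 0 := by
  set M := v.submatrix ρ id
  obtain ⟨i, hi⟩ : ∃ i, (M.updateRow i (v i₀)).det ≠ 0 := by
    by_contra! h
    have hcramer : cramer Mᵀ (v i₀) = 0 :=
      funext fun i => by rw [cramer_transpose_apply]; exact h i
    have h₀ := congrFun (mulVec_cramer Mᵀ (v i₀)) k₀
    rw [hcramer, mulVec_zero, det_transpose, hv] at h₀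
    exact hρ (by simpa using h₀.symm)
  have hupd : M.updateRow i (v i₀) = v.submatrix (Function.update ρ i i₀) id := by
    ext j k
    by_cases hj : j = i <;> simp [M, updateRow_apply, hj]
  refine ⟨Function.update ρ i i₀ ∘ Equiv.swap i k₀, by simp, ?_⟩
  change ((v.submatrix _ id).submatrix (Equiv.swap i k₀) id).det ≠ 0
  have hsign : IsUnit ((Equiv.Perm.sign (Equiv.swap i k₀) : ℤ) : R) :=
    (Units.isUnit _).map (Int.castRingHom R)
  rwa [det_permute, ← hupd, ne_eq, hsign.mul_right_eq_zero]

lemma exists_mulVec_eq_zero_of_det_cons_eq_zero (S : Subring R) {v : Matrix ι κ R}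
    (hv : ∀ i k, v i k ∈ S) {s : ℕ} {ρ : Fin s → ι} {c : Fin (s + 1) → κ}
    (hc : Function.Injective c) (hρ : (v.submatrix ρ (c ∘ Fin.succ)).det ≠ 0)
    (hmax : ∀ i, (v.submatrix (Fin.cons i ρ) c).det = 0) :
    ∃ a : κ → R, (∀ k, a k ∈ S) ∧ v *ᵥ a = 0 ∧ a ≠ 0 := by
  set a' : Fin (s + 1) → R := fun j => (-1) ^ (j : ℕ) * (v.submatrix ρ (c ∘ j.succAbove)).det
  refine ⟨Function.extend c a' 0, fun k => ?_, ?_, ?_⟩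
  · by_cases hk : ∃ j, c j = k
    · obtain ⟨j, rfl⟩ := hk
      rw [hc.extend_apply]
      exact S.mul_mem (S.pow_mem (S.neg_mem S.one_mem) _) (det_mem_subring S fun _ _ => hv _ _)
    · rw [Function.extend_apply' _ _ _ hk]
      exact S.zero_mem
  · funext i
    rw [Pi.zero_apply, ← hmax i, det_succ_row_zero]
    refine (Fintype.sum_of_injective c hc _ _ (fun k hk => ?_) fun j => ?_).symm
    · rw [Function.extend_apply' _ _ _ (by simpa using hk), Pi.zero_apply, mul_zero]
    · simp [a', hc.extend_apply]
      ring
  · intro h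
    apply hρ
    simpa [a', hc.extend_apply, Fin.succAbove_zero] using congrFun h (c 0)

lemma exists_mulVec_eq_zero_of_forall_det_eq_zero [Nontrivial R] (S : Subring R)
    {v : Matrix ι κ R} (hv : ∀ i k, v i k ∈ S) (h : ∀ ρ : κ → ι, (v.submatrix ρ id).det = 0) :
    ∃ a : κ → R, (∀ k, a k ∈ S) ∧ v *ᵥ a = 0 ∧ a ≠ 0 := by
  let P : ℕ → Prop := fun s => ∃ (ρ : Fin s → ι) (c : Fin s ↪ κ), (v.submatrix ρ c).det ≠ 0
  have hn : ¬ P (Fintype.card κ) := by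
    rintro ⟨ρ, c, hρc⟩
    let e : Fin (Fintype.card κ) ≃ κ := Equiv.ofBijective c
      ((Fintype.bijective_iff_injective_and_card c).mpr ⟨c.injective, by simp⟩)
    apply hρc
    rw [← h (ρ ∘ e.symm), ← det_submatrix_equiv_self e]
    congr 1
    ext i j
    simp [e]
  have hex : ∃ s, ¬ P s := ⟨_, hn⟩
  have h0 : Nat.find hex ≠ 0 := fun h0 =>
    Nat.find_spec hex (h0 ▸ ⟨Fin.elim0, ⟨Fin.elim0, fun i => i.elim0⟩, by simp⟩)
  -- `s` is the rank of `v`: some `s × s` minor is nonzero, all `(s + 1) × (s + 1)` ones vanish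
  obtain ⟨s, hs⟩ := Nat.exists_eq_succ_of_ne_zero h0
  obtain ⟨ρ, c, hρc⟩ : P s := not_not.mp (Nat.find_min hex (by omega))
  obtain ⟨c₀, hc₀⟩ : ∃ c₀, c₀ ∉ Set.range c := by
    by_contra! hall
    have hcard := Fintype.card_le_of_surjective c hall
    have hle := Nat.find_min' hex hn
    rw [Fintype.card_fin] at hcard
    omega
  have hc : Function.Injective (Fin.cons c₀ c : Fin (s + 1) → κ) :=
    Fin.cons_injective_iff.mpr ⟨hc₀, c.injective⟩
  refine exists_mulVec_eq_zero_of_det_cons_eq_zero S hv hc (by simpa using hρc) fun i => ?_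
  by_contra hne
  have hspec := Nat.find_spec hex
  rw [hs] at hspec
  exact hspec ⟨Fin.cons i ρ, ⟨_, hc⟩, hne⟩

theorem exists_det_submatrix_ne_zero_iff [NoZeroDivisors R] [Nontrivial R] (S : Subring R)
    {v : Matrix ι κ R} (hv : ∀ i k, v i k ∈ S) :
    (∃ ρ : κ → ι, (v.submatrix ρ id).det ≠ 0) ↔
      ¬∃ a : κ → R, (∀ k, a k ∈ S) ∧ v *ᵥ a = 0 ∧ a ≠ 0 := by
  constructor
  · rintro ⟨ρ, hρ⟩ ⟨a, -, ha, ha0⟩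
    exact ha0 (eq_zero_of_mulVec_eq_zero hρ (funext fun i => congrFun ha (ρ i)))
  · intro h
    by_contra! hdet
    exact h (exists_mulVec_eq_zero_of_forall_det_eq_zero S hv hdet)

end Matrix

namespace MvPowerSeries

section CommSemiring

variable {σ τ υ R : Type*} [CommSemiring R]

lemma coeff_mapDomain_rename {u : σ → τ} [Filter.TendstoCofinite u] (hu : Function.Injective u)
    (F : MvPowerSeries σ R) (d : σ →₀ ℕ) :
    coeff (d.mapDomain u) (rename u F) = coeff d F := by
  simpa [Finsupp.embDomain_eq_mapDomain] using coeff_embDomain_rename ⟨u, hu⟩ F d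

lemma coeff_rename_eq_zero_of_apply_ne_zero {u : σ → τ} [Filter.TendstoCofinite u] {ξ : τ}
    (hξ : ξ ∉ Set.range u) {E : τ →₀ ℕ} (hE : E ξ ≠ 0) (F : MvPowerSeries σ R) :
    coeff E (rename u F) = 0 :=
  coeff_rename_eq_zero _ _ fun ⟨d, hd⟩ => hE (hd ▸ Finsupp.mapDomain_of_notMem_range d ξ hξ)

lemma pderiv_rename {u : σ → τ} [Filter.TendstoCofinite u] (hu : Function.Injective u) (i : σ)
    (F : MvPowerSeries σ R) : pderiv R (u i) (rename u F) = rename u (pderiv R i F) := by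
  ext n
  by_cases hn : n ∈ Set.range (Finsupp.mapDomain u)
  · obtain ⟨d, rfl⟩ := hn
    rw [coeff_pderiv, ← Finsupp.mapDomain_single, ← Finsupp.mapDomain_add,
      coeff_mapDomain_rename hu, coeff_mapDomain_rename hu, coeff_pderiv,
      Finsupp.mapDomain_apply hu]
  · rw [coeff_rename_eq_zero _ _ hn, coeff_pderiv, coeff_rename_eq_zero, zero_mul]
    simp only [Finsupp.mem_range_mapDomain_iff u hu, not_forall] at hn ⊢
    obtain ⟨b, hb, hnb⟩ := hn
    exact ⟨b, hb, by simp [hnb]⟩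

lemma coeff_sumElim_rename_inl (x : MvPowerSeries σ R) (a : σ →₀ ℕ) (b : τ →₀ ℕ) :
    coeff (Finsupp.sumElim a b) (rename Sum.inl x) = if b = 0 then coeff a x else 0 := by
  split_ifs with hb
  · rw [hb, ← Finsupp.embDomain_inl]
    exact coeff_embDomain_rename Function.Embedding.inl x a
  · refine coeff_rename_eq_zero _ _ ?_
    rintro ⟨c, hc⟩
    obtain ⟨j, hj⟩ := Finsupp.ne_iff.mp hb
    apply hj
    simpa [Finsupp.mapDomain_of_notMem_range] using (DFunLike.congr_fun hc (Sum.inr j)).symm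

lemma coeff_sumElim_mul (f g : MvPowerSeries (σ ⊕ τ) R) (d : σ →₀ ℕ) (γ : τ →₀ ℕ) :
    coeff (Finsupp.sumElim d γ) (f * g) = ∑ p ∈ antidiagonal d, ∑ q ∈ antidiagonal γ,
      coeff (Finsupp.sumElim p.1 q.1) f * coeff (Finsupp.sumElim p.2 q.2) g := by
  rw [coeff_mul, ← Finsupp.image_sumElim_product_antidiagonal, Finset.sum_image,
    Finset.sum_product]
  rintro ⟨⟨a, b⟩, c, e⟩ - ⟨⟨a', b'⟩, c', e'⟩ - h
  have hinj := (Finsupp.sumFinsuppEquivProdFinsupp (α := σ) (β := τ) (γ := ℕ)).symm.injective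
  obtain ⟨h₁, h₂⟩ := Prod.mk.inj h
  obtain ⟨rfl, rfl⟩ := Prod.mk.inj (hinj h₁)
  obtain ⟨rfl, rfl⟩ := Prod.mk.inj (hinj h₂)
  rfl

variable (R) in
/-- The coefficient of `Y ^ γ` in a series in the variables `X ⊕ Y`, as a series in `X`. -/
def coeffRight (γ : τ →₀ ℕ) : MvPowerSeries (σ ⊕ τ) R →ₗ[R] MvPowerSeries σ R where
  toFun F d := coeff (Finsupp.sumElim d γ) F
  map_add' _ _ := rfl
  map_smul' _ _ := rfl

lemma coeff_coeffRight (γ : τ →₀ ℕ) (F : MvPowerSeries (σ ⊕ τ) R) (d : σ →₀ ℕ) :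
    coeff d (coeffRight R γ F) = coeff (Finsupp.sumElim d γ) F := rfl

lemma eq_zero_iff_forall_coeffRight_eq_zero {F : MvPowerSeries (σ ⊕ τ) R} :
    F = 0 ↔ ∀ γ : τ →₀ ℕ, coeffRight R γ F = 0 := by
  refine ⟨fun h γ => by rw [h, map_zero], fun h => ext fun E => ?_⟩
  rw [← Finsupp.comapDomain_sumElim_comapDomain E, ← coeff_coeffRight, h, map_zero, map_zero]

lemma coeffRight_rename_inl (γ : τ →₀ ℕ) (x : MvPowerSeries σ R) :
    coeffRight R γ (rename Sum.inl x) = if γ = 0 then x else 0 := by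
  ext d
  rw [coeff_coeffRight, coeff_sumElim_rename_inl]
  split_ifs <;> simp

lemma coeffRight_rename_inl_mul (γ : τ →₀ ℕ) (x : MvPowerSeries σ R)
    (F : MvPowerSeries (σ ⊕ τ) R) :
    coeffRight R γ (rename Sum.inl x * F) = x * coeffRight R γ F := by
  ext d
  rw [coeff_coeffRight, coeff_sumElim_mul, coeff_mul]
  refine Finset.sum_congr rfl fun p _ => ?_
  rw [Finset.sum_eq_single (0, γ)]
  · rw [coeff_sumElim_rename_inl, if_pos rfl, coeff_coeffRight]
  · rintro q hq hne
    rw [coeff_sumElim_rename_inl, if_neg, zero_mul]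
    rintro h0
    rw [mem_antidiagonal, h0, zero_add] at hq
    exact hne (Prod.ext h0 hq)
  · simp

lemma coeff_coeffRight_rename_swap (γ : τ →₀ ℕ) (F : MvPowerSeries (τ ⊕ σ) R) (d : σ →₀ ℕ) :
    coeff d (coeffRight R γ (rename Sum.swap F)) = coeff (Finsupp.sumElim γ d) F := by
  rw [coeff_coeffRight, ← Finsupp.mapDomain_swap_sumElim,
    coeff_mapDomain_rename Sum.swap_leftInverse.injective]

lemma coeffRight_pderiv_inl (γ : τ →₀ ℕ) (k : σ) (F : MvPowerSeries (σ ⊕ τ) R) :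
    coeffRight R γ (pderiv R (Sum.inl k) F) = pderiv R k (coeffRight R γ F) := by
  ext d
  simp only [coeff_coeffRight, coeff_pderiv, Finsupp.sumElim_inl]
  rw [← Finsupp.sumElim_single_zero, ← Finsupp.sumElim_add, add_zero]

variable [Fintype σ]

variable (R) in
/-- `L F` for the vector field `L = ∑ₖ aₖ(X) ∂/∂Xₖ`, acting on series in the variables `X ⊕ Y`. -/
def fieldDeriv (a : σ → MvPowerSeries σ R) (F : MvPowerSeries (σ ⊕ τ) R) :
    MvPowerSeries (σ ⊕ τ) R :=
  ∑ k, rename Sum.inl (a k) * pderiv R (Sum.inl k) F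

lemma coeffRight_fieldDeriv (γ : τ →₀ ℕ) (a : σ → MvPowerSeries σ R)
    (F : MvPowerSeries (σ ⊕ τ) R) :
    coeffRight R γ (fieldDeriv R a F) = ∑ k, a k * pderiv R k (coeffRight R γ F) := by
  simp only [fieldDeriv, map_sum, coeffRight_rename_inl_mul, coeffRight_pderiv_inl]

lemma fieldDeriv_rename {v : σ ⊕ τ → σ ⊕ υ} [Filter.TendstoCofinite v]
    (hv : Function.Injective v) (hvl : ∀ k, v (Sum.inl k) = Sum.inl k)
    (a : σ → MvPowerSeries σ R) (F : MvPowerSeries (σ ⊕ τ) R) :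
    fieldDeriv R a (rename v F) = rename v (fieldDeriv R a F) := by
  have hcomp : v ∘ Sum.inl = Sum.inl := funext hvl
  simp only [fieldDeriv, map_sum, map_mul, rename_rename, hcomp, ← pderiv_rename hv, hvl]

end CommSemiring

lemma eq_zero_of_eq_mul_X_sub {σ R : Type*} [CommRing R] {ξ : σ} {g q S : MvPowerSeries σ R}
    (hS₀ : constantCoeff S = 0) (hS : ∀ E : σ →₀ ℕ, E ξ ≠ 0 → coeff E S = 0)
    (hg : ∀ E : σ →₀ ℕ, E ξ ≠ 0 → coeff E g = 0) (h : g = q * (X ξ - S)) : q = 0 := by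
  ext E
  induction hn : (E.erase ξ).degree using Nat.strong_induction_on generalizing E with
  | _ n ih =>
  -- compare the coefficients of `X ^ E * X ξ`: that of `q * X ξ` is `coeff E q`, and
  -- every term of that of `q * S` involves `q` at a lower degree in the variables other than `ξ`
  have hE : coeff (E + Finsupp.single ξ 1) g = 0 := hg _ (by simp)
  rw [h, mul_sub, map_sub, X, coeff_add_mul_monomial, mul_one, sub_eq_zero] at hE
  rw [hE, coeff_mul, map_zero]
  refine Finset.sum_eq_zero fun p hp => ?_
  rw [mem_antidiagonal] at hp
  by_cases hpξ : p.2 ξ = 0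
  · by_cases hp0 : p.2 = 0
    · rw [hp0, coeff_zero_eq_constantCoeff_apply, hS₀, mul_zero]
    · have herase : p.1.erase ξ + p.2 = E.erase ξ := by
        rw [← Finsupp.erase_of_notMem_support (Finsupp.notMem_support_iff.mpr hpξ),
          ← Finsupp.erase_add, hp, Finsupp.erase_add, Finsupp.erase_single, add_zero]
      have hpos : 0 < p.2.degree :=
        Nat.pos_of_ne_zero ((Finsupp.degree_eq_zero_iff _).not.mpr hp0)
      rw [ih _ (by rw [← hn, ← herase, map_add]; omega) p.1 rfl, map_zero, zero_mul]
  · rw [hS _ hpξ, mul_zero]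

end MvPowerSeries

lemma coeff_pder {σ : Type*} (i : σ) (f : MvPowerSeries σ ℂ) (d : σ →₀ ℕ) :
    coeff d (pder i f) = ((d i + 1 : ℕ) : ℂ) * coeff (d + Finsupp.single i 1) f := rfl

lemma pder_eq_pderiv {σ : Type*} (i : σ) (f : MvPowerSeries σ ℂ) :
    pder i f = pderiv ℂ i f := by
  ext d
  rw [coeff_pder, coeff_pderiv, mul_comm]
  push_cast
  rfl

lemma msubst_X_eq_rename {σ τ : Type*} [Fintype σ] [DecidableEq σ] [DecidableEq τ]
    (u : σ → τ) (f : MvPowerSeries σ ℂ) :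
    msubst (fun s => X (u s)) f = rename u f := by
  ext e
  change ∑ d ∈ _, coeff d f * coeff e (d.prod fun s k => X (u s) ^ k) = _
  simp only [coeff_rename, ← monomial_mapDomain_apply_one, coeff_monomial, mul_ite,
    mul_one, mul_zero]
  rw [← Finset.sum_filter]
  refine Finset.sum_congr (Finset.ext fun d => ?_) fun _ _ => rfl
  simp only [Finset.mem_filter, Finset.mem_Iic, Set.Finite.mem_toFinset, Set.mem_preimage,
    Set.mem_singleton_iff, eq_comm (a := e)]
  refine ⟨And.right, fun hd => ⟨fun s => ?_, hd⟩⟩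
  simpa [Finsupp.single_apply, ← hd, degf_eq_degree, Finsupp.degree_mapDomain] using
    Finsupp.le_degree s d

section Convergence

variable {σ : Type*} {f g : MvPowerSeries σ ℂ}

lemma IsConv.exists_common_bound (hf : IsConv f) (hg : IsConv g) : ∃ C r : ℝ, 0 < r ∧
    (∀ d, ‖coeff d f‖ * r ^ degf d ≤ C) ∧ ∀ d, ‖coeff d g‖ * r ^ degf d ≤ C := by
  obtain ⟨Cf, rf, hrf, hf⟩ := hf
  obtain ⟨Cg, rg, hrg, hg⟩ := hg
  have hr := lt_min hrf hrg
  have shrink : ∀ (h : MvPowerSeries σ ℂ) {C r : ℝ}, (∀ d, ‖coeff d h‖ * r ^ degf d ≤ C) →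
      min rf rg ≤ r → ∀ d, ‖coeff d h‖ * min rf rg ^ degf d ≤ C := fun h _ _ hb hle d =>
    (mul_le_mul_of_nonneg_left (pow_le_pow_left₀ hr.le hle _) (norm_nonneg _)).trans (hb d)
  exact ⟨max Cf Cg, min rf rg, hr,
    fun d => (shrink f hf (min_le_left _ _) d).trans (le_max_left _ _),
    fun d => (shrink g hg (min_le_right _ _) d).trans (le_max_right _ _)⟩

lemma IsConv.add (hf : IsConv f) (hg : IsConv g) : IsConv (f + g) := by
  obtain ⟨C, r, hr, hf, hg⟩ := hf.exists_common_bound hg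
  refine ⟨C + C, r, hr, fun d => ?_⟩
  rw [map_add]
  exact (mul_le_mul_of_nonneg_right (norm_add_le _ _) (by positivity)).trans
    (by rw [add_mul]; exact add_le_add (hf d) (hg d))

lemma IsConv.neg (hf : IsConv f) : IsConv (-f) := by
  obtain ⟨C, r, hr, hf⟩ := hf
  exact ⟨C, r, hr, fun d => by simpa using hf d⟩

lemma IsConv.mul (hf : IsConv f) (hg : IsConv g) : IsConv (f * g) := by
  obtain ⟨C, r, hr, hf, hg⟩ := hf.exists_common_bound hg
  have hC : 0 ≤ C := (mul_nonneg (norm_nonneg _) (pow_nonneg hr.le _)).trans (hf 0)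
  refine ⟨C * C, r / 2, half_pos hr, fun d => ?_⟩
  have hterm : ∀ p ∈ antidiagonal d, ‖coeff p.1 f * coeff p.2 g‖ * r ^ degf d ≤ C * C := by
    intro p hp
    rw [mem_antidiagonal] at hp
    rw [← hp, degf_add, pow_add, norm_mul]
    calc _ = (‖coeff p.1 f‖ * r ^ degf p.1) * (‖coeff p.2 g‖ * r ^ degf p.2) := by ring
      _ ≤ C * C := mul_le_mul (hf _) (hg _) (by positivity) hC
  calc ‖coeff d (f * g)‖ * (r / 2) ^ degf d
      ≤ (∑ p ∈ antidiagonal d, ‖coeff p.1 f * coeff p.2 g‖ * r ^ degf d) / 2 ^ degf d := by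
        rw [coeff_mul, ← Finset.sum_mul, div_pow, mul_div_assoc]
        exact mul_le_mul_of_nonneg_right (norm_sum_le _ _) (by positivity)
    _ ≤ (antidiagonal d).card * (C * C) / 2 ^ degf d := by
        gcongr
        simpa using Finset.sum_le_sum hterm
    _ ≤ 2 ^ degf d * (C * C) / 2 ^ degf d := by
        gcongr
        exact_mod_cast Finsupp.card_antidiagonal_le_two_pow d
    _ = C * C := by field_simp

lemma IsConv.pder (hf : IsConv f) (i : σ) : IsConv (pder i f) := by
  obtain ⟨C, r, hr, hf⟩ := hf
  refine ⟨C / r, r / 2, half_pos hr, fun d => ?_⟩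
  have hdi : ((d i + 1 : ℕ) : ℝ) ≤ 2 ^ degf d := by
    exact_mod_cast Nat.succ_le_of_lt ((Finsupp.le_degree i d).trans_lt Nat.lt_two_pow_self)
  have hf' := hf (d + Finsupp.single i 1)
  rw [degf_add, degf_eq_degree (Finsupp.single i 1), Finsupp.degree_single, pow_succ] at hf'
  rw [le_div_iff₀ hr, coeff_pder, norm_mul, Complex.norm_natCast]
  calc ((d i + 1 : ℕ) : ℝ) * ‖coeff (d + Finsupp.single i 1) f‖ * (r / 2) ^ degf d * r
      = ((d i + 1 : ℕ) / 2 ^ degf d) *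
          (‖coeff (d + Finsupp.single i 1) f‖ * (r ^ degf d * r)) := by
        rw [div_pow]; ring
    _ ≤ 1 * C := by
        gcongr
        exact (div_le_one (by positivity)).mpr hdi
    _ = C := one_mul C

lemma IsConv.conjS (hf : IsConv f) : IsConv (conjS f) := by
  obtain ⟨C, r, hr, hf⟩ := hf
  exact ⟨C, r, hr, fun d => by simpa [_root_.conjS] using hf d⟩

lemma isConv_C (c : ℂ) : IsConv (C (σ := σ) c) := by
  refine ⟨‖c‖, 1, one_pos, fun d => ?_⟩
  rw [coeff_C, one_pow, mul_one]
  split_ifs <;> simp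

lemma isConv_X (s : σ) : IsConv (X s : MvPowerSeries σ ℂ) := by
  refine ⟨1, 1, one_pos, fun d => ?_⟩
  rw [coeff_X, one_pow, mul_one]
  split_ifs <;> simp

variable (σ) in
def convergentSubring : Subring (MvPowerSeries σ ℂ) where
  carrier := {f | IsConv f}
  mul_mem' := IsConv.mul
  one_mem' := by simpa using isConv_C (σ := σ) 1
  add_mem' := IsConv.add
  zero_mem' := by simpa using isConv_C (σ := σ) 0
  neg_mem' := IsConv.neg

lemma mem_convergentSubring : f ∈ convergentSubring σ ↔ IsConv f := Iff.rfl

end Convergence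

section CR

variable {m : ℕ}

lemma thetaCoef_zero (Θ : MvPowerSeries (Fin m ⊕ (Fin m ⊕ Unit)) ℂ) :
    thetaCoef m Θ 0 = X (Sum.inr ()) :=
  if_pos rfl

lemma coeff_thetaCoef {Θ : MvPowerSeries (Fin m ⊕ (Fin m ⊕ Unit)) ℂ} {β : Fin m →₀ ℕ}
    (hβ : β ≠ 0) (d : Fin m ⊕ Unit →₀ ℕ) :
    coeff d (thetaCoef m Θ β) = coeff (Finsupp.sumElim β d) (conjS Θ) := by
  simp only [thetaCoef, hβ]
  rfl

lemma IsConv.thetaCoef {Θ : MvPowerSeries (Fin m ⊕ (Fin m ⊕ Unit)) ℂ} (hΘ : IsConv Θ)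
    (β : Fin m →₀ ℕ) : IsConv (thetaCoef m Θ β) := by
  by_cases hβ : β = 0
  · rw [hβ, thetaCoef_zero]
    exact isConv_X _
  obtain ⟨C, r, hr, hb⟩ := hΘ.conjS
  refine ⟨C / r ^ degf β, r, hr, fun d => ?_⟩
  rw [le_div_iff₀ (by positivity), mul_assoc, ← pow_add, add_comm, ← degf_sumElim]
  simpa [coeff_thetaCoef hβ] using hb (Finsupp.sumElim β d)

def thetaCoefJacobian (Θ : MvPowerSeries (Fin m ⊕ (Fin m ⊕ Unit)) ℂ) :
    Matrix (Fin m →₀ ℕ) (Fin m ⊕ Unit) (MvPowerSeries (Fin m ⊕ Unit) ℂ) :=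
  Matrix.of fun β j => pder j (thetaCoef m Θ β)

lemma thetaCoefJacobian_mem_convergentSubring {Θ : MvPowerSeries (Fin m ⊕ (Fin m ⊕ Unit)) ℂ}
    (hΘ : IsConv Θ) (β : Fin m →₀ ℕ) (j : Fin m ⊕ Unit) :
    thetaCoefJacobian Θ β j ∈ convergentSubring _ :=
  (hΘ.thetaCoef β).pder j

lemma thetaCoefJacobian_zero (Θ : MvPowerSeries (Fin m ⊕ (Fin m ⊕ Unit)) ℂ) :
    thetaCoefJacobian Θ 0 = Pi.single (Sum.inr ()) 1 := by
  funext j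
  rw [thetaCoefJacobian, Matrix.of_apply, thetaCoef_zero, pder_eq_pderiv, pderiv_X]
  simp [Pi.single_apply, eq_comm]

lemma holoNondeg_iff_exists_det_ne_zero {Θ : MvPowerSeries (Fin m ⊕ (Fin m ⊕ Unit)) ℂ} :
    HoloNondeg m Θ ↔
      ∃ ρ : Fin m ⊕ Unit → (Fin m →₀ ℕ), ((thetaCoefJacobian Θ).submatrix ρ id).det ≠ 0 := by
  refine ⟨fun ⟨B, _, hB⟩ => ⟨_, hB⟩, fun ⟨ρ, hρ⟩ => ?_⟩
  obtain ⟨ρ', hρ'0, hρ'⟩ :=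
    Matrix.exists_det_submatrix_ne_zero_of_row_eq_single (thetaCoefJacobian_zero Θ) hρ
  have hinj := Matrix.injective_of_det_submatrix_ne_zero hρ'
  refine ⟨ρ' ∘ Sum.inl, fun j h => Sum.inl_ne_inr (hinj (h.trans hρ'0.symm)), ?_⟩
  have hρ'_eq : Sum.elim (ρ' ∘ Sum.inl) (fun _ => 0) = ρ' := by
    funext i
    rcases i with i | ⟨⟩
    exacts [rfl, hρ'0.symm]
  show ((thetaCoefJacobian Θ).submatrix (Sum.elim (ρ' ∘ Sum.inl) fun _ => 0) id).det ≠ 0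
  rwa [hρ'_eq]

/-- `r̄ - ξ = -z + iΘ(ζ,w,z)` in the variables `(w,z,ζ)`, indexed by `(Fin m ⊕ Unit) ⊕ Fin m`. -/
def rbarSubXi (Θ : MvPowerSeries (Fin m ⊕ (Fin m ⊕ Unit)) ℂ) :
    MvPowerSeries ((Fin m ⊕ Unit) ⊕ Fin m) ℂ :=
  C Complex.I * rename Sum.swap (conjS Θ) - X (Sum.inl (Sum.inr ()))

lemma rbarSeries_eq (Θ : MvPowerSeries (Fin m ⊕ (Fin m ⊕ Unit)) ℂ) :
    rbarSeries m Θ = X (Sum.inr (Sum.inr ())) + rename (Sum.map id Sum.inl) (rbarSubXi Θ) := by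
  have hvars : (Sum.elim (fun j => X (Sum.inr (Sum.inl j)))
      (Sum.elim (fun j => X (Sum.inl (Sum.inl j))) fun _ => X (Sum.inl (Sum.inr ()))) :
        Fin m ⊕ (Fin m ⊕ Unit) → MvPowerSeries ((Fin m ⊕ Unit) ⊕ (Fin m ⊕ Unit)) ℂ) =
      fun s => X ((Sum.map id Sum.inl ∘ Sum.swap) s) := by
    funext s
    rcases s with j | j | ⟨⟩ <;> rfl
  rw [rbarSeries, hvars, msubst_X_eq_rename, ← rename_rename, rbarSubXi, map_sub, map_mul,
    rename_C, rename_X]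
  simp only [Sum.map_inl, id]
  ring

lemma constantCoeff_rbarSubXi {Θ : MvPowerSeries (Fin m ⊕ (Fin m ⊕ Unit)) ℂ}
    (hΘ : NormVanish m Θ) : constantCoeff (rbarSubXi Θ) = 0 := by
  have h0 := hΘ.1 0 fun j => rfl
  rw [coeff_zero_eq_constantCoeff_apply] at h0
  simp [rbarSubXi, conjS, h0]

lemma coeffRight_rbarSubXi {Θ : MvPowerSeries (Fin m ⊕ (Fin m ⊕ Unit)) ℂ} (hΘ : NormVanish m Θ)
    (β : Fin m →₀ ℕ) :
    coeffRight ℂ β (rbarSubXi Θ) = (if β = 0 then -1 else Complex.I) • thetaCoef m Θ β := by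
  rw [rbarSubXi, map_sub, ← smul_eq_C_mul, map_smul, ← rename_X Sum.inl, coeffRight_rename_inl]
  by_cases hβ : β = 0
  · subst hβ
    ext d
    have h0 : coeff (Finsupp.sumElim 0 d) (conjS Θ) = 0 := by
      simp [conjS, hΘ.1 (Finsupp.sumElim 0 d) fun j => rfl]
    simp [thetaCoef_zero, coeff_coeffRight_rename_swap, h0]
  · ext d
    simp [hβ, coeff_thetaCoef hβ, coeff_coeffRight_rename_swap]

lemma fieldDeriv_rbarSeries (Θ : MvPowerSeries (Fin m ⊕ (Fin m ⊕ Unit)) ℂ)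
    (a : Fin m ⊕ Unit → MvPowerSeries (Fin m ⊕ Unit) ℂ) :
    fieldDeriv ℂ a (rbarSeries m Θ) =
      rename (Sum.map id Sum.inl) (fieldDeriv ℂ a (rbarSubXi Θ)) := by
  rw [← fieldDeriv_rename (Sum.map_injective.mpr ⟨Function.injective_id, Sum.inl_injective⟩)
    fun _ => rfl, rbarSeries_eq]
  simp only [fieldDeriv, map_add, pderiv_X_of_ne Sum.inr_ne_inl, zero_add]

lemma fieldDeriv_rbarSubXi_eq_zero_iff {Θ : MvPowerSeries (Fin m ⊕ (Fin m ⊕ Unit)) ℂ}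
    (hΘ : NormVanish m Θ) (a : Fin m ⊕ Unit → MvPowerSeries (Fin m ⊕ Unit) ℂ) :
    fieldDeriv ℂ a (rbarSubXi Θ) = 0 ↔ thetaCoefJacobian Θ *ᵥ a = 0 := by
  rw [eq_zero_iff_forall_coeffRight_eq_zero, funext_iff]
  refine forall_congr' fun β => ?_
  have hc : (if β = 0 then -1 else Complex.I) ≠ 0 := by split_ifs <;> simp
  have hβ : coeffRight ℂ β (fieldDeriv ℂ a (rbarSubXi Θ)) =
      (if β = 0 then -1 else Complex.I) • (thetaCoefJacobian Θ *ᵥ a) β := by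
    simp only [coeffRight_fieldDeriv, coeffRight_rbarSubXi hΘ, Derivation.map_smul,
      mul_smul_comm, ← Finset.smul_sum, Matrix.mulVec, dotProduct, thetaCoefJacobian,
      Matrix.of_apply, pder_eq_pderiv, mul_comm]
  rw [hβ, smul_eq_zero, or_iff_right hc, Pi.zero_apply]

theorem isTangentField_iff {Θ : MvPowerSeries (Fin m ⊕ (Fin m ⊕ Unit)) ℂ} (hΘ : NormVanish m Θ)
    (a : Fin m ⊕ Unit → MvPowerSeries (Fin m ⊕ Unit) ℂ) :
    IsTangentField m Θ a ↔ (∀ k, IsConv (a k)) ∧ thetaCoefJacobian Θ *ᵥ a = 0 := by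
  have hξ : Sum.inr (Sum.inr ()) ∉ Set.range (Sum.map id Sum.inl :
      (Fin m ⊕ Unit) ⊕ Fin m → (Fin m ⊕ Unit) ⊕ (Fin m ⊕ Unit)) := by
    rintro ⟨_ | _, h⟩ <;> simp at h
  have hsum : ∑ k, msubst (fun j => X (Sum.inl j)) (a k) * pder (Sum.inl k) (rbarSeries m Θ) =
      fieldDeriv ℂ a (rbarSeries m Θ) := by
    simp only [fieldDeriv, msubst_X_eq_rename, pder_eq_pderiv]
  rw [IsTangentField, hsum, fieldDeriv_rbarSeries, rbarSeries_eq,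
    ← fieldDeriv_rbarSubXi_eq_zero_iff hΘ]
  refine and_congr_right fun _ => ⟨fun ⟨q, _, hq⟩ => ?_, fun h =>
    ⟨0, zero_mem (convergentSubring _), by rw [h, map_zero, zero_mul]⟩⟩
  have hq0 : q = 0 := eq_zero_of_eq_mul_X_sub (S := -rename (Sum.map id Sum.inl) (rbarSubXi Θ))
    (by simp [constantCoeff_rbarSubXi hΘ])
    (fun E hE => by rw [map_neg, coeff_rename_eq_zero_of_apply_ne_zero hξ hE, neg_zero])
    (fun E hE => coeff_rename_eq_zero_of_apply_ne_zero hξ hE _) (by rw [hq, sub_neg_eq_add])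
  rw [hq0, zero_mul] at hq
  exact rename_injective ⟨_, Sum.map_injective.mpr ⟨Function.injective_id, Sum.inl_injective⟩⟩
    (hq.trans (map_zero _).symm)

end CR

theorem holomorphic_nondegeneracy_characterization_general
    (m : ℕ)
    (Θ' : MvPowerSeries (Fin m ⊕ (Fin m ⊕ Unit)) ℂ) (hΘ' : NormalEnc m Θ') :
    (¬ ∃ a : (Fin m ⊕ Unit) → MvPowerSeries (Fin m ⊕ Unit) ℂ,
        IsTangentField m Θ' a ∧ ∃ k, a k ≠ 0)
      ↔ HoloNondeg m Θ' := by
  obtain ⟨hconv, hnorm, -⟩ := hΘ'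
  rw [holoNondeg_iff_exists_det_ne_zero, Matrix.exists_det_submatrix_ne_zero_iff
    (convergentSubring _) (thetaCoefJacobian_mem_convergentSubring hconv)]
  simp only [isTangentField_iff hnorm, mem_convergentSubring, and_assoc, Function.ne_iff,
    Pi.zero_apply]

/-- **Lemma 3.3 (Stanton's criterion).** `(M',0)` is holomorphically nondegenerate
at `0` (no nonzero convergent holomorphic vector field tangent to it) if and only if
there are multiindices `β^1,…,β^{n-1} ≠ 0` such that, with `β^n := 0`,
`det(∂Θ'_{β^i}/∂t'_j(w',z'))_{1≤i,j≤n} ≢ 0`. -/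
theorem holomorphic_nondegeneracy_characterization
    (m : ℕ) (hm : 1 ≤ m)
    (Θ' : MvPowerSeries (Fin m ⊕ (Fin m ⊕ Unit)) ℂ) (hΘ' : NormalEnc m Θ') :
    (¬ ∃ a : (Fin m ⊕ Unit) → MvPowerSeries (Fin m ⊕ Unit) ℂ,
        IsTangentField m Θ' a ∧ ∃ k, a k ≠ 0)
      ↔ HoloNondeg m Θ' :=
  holomorphic_nondegeneracy_characterization_general m Θ' hΘ'
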